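/- The sequence x_n defined by x_1 = 3 and, for n ≥ 2, x_n being the smallest integer greater than x_{n-1} with v_2(x_n) = v_2(n), satisfies the recursions x_{2n-1} = 2·x_{n-1} + 1 for n ≥ 2 and x_{2n} = 2·x_n for n ≥ 1, with x_1 = 3 and x_2 = 6. -/

import Mathlib

/-!
By induction, `x n = n + 2 ^ (⌊log₂ n⌋ + 1)`. Adding a power of two larger than `n` does not
change `v₂ n`, and every candidate above `x (n - 1)` is at least this value; when `n = 2 ^ L` this
uses that a number with `v₂ = L` exceeding `2 ^ (L + 1)` is an odd multiple of `2 ^ L`, so at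
least `3 * 2 ^ L`. Both recursions follow from the closed form, as
`⌊log₂ (2n)⌋ = ⌊log₂ (2n + 1)⌋ = ⌊log₂ n⌋ + 1`.
-/

theorem padicValNat_add_pow_of_lt {p n L : ℕ} [hp : Fact p.Prime] (hn : n ≠ 0) (h : n < p ^ L) :
    padicValNat p (n + p ^ L) = padicValNat p n := by
  have hv : padicValNat p n < L :=
    (Nat.pow_lt_pow_iff_right hp.out.one_lt).mp
      ((Nat.le_of_dvd (Nat.pos_of_ne_zero hn) pow_padicValNat_dvd).trans_lt h)
  have hpL : (p : ℚ) ^ L ≠ 0 := pow_ne_zero _ (by exact_mod_cast hp.out.ne_zero)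
  have := padicValRat.add_eq_of_lt (p := p) (q := n) (r := p ^ L) (by positivity)
    (by exact_mod_cast hn) hpL (by simpa [padicValRat.of_nat, padicValRat.pow] using hv)
  exact_mod_cast this

theorem succ_mul_pow_le_of_padicValNat_eq {p m k : ℕ} [hp : Fact p.Prime] (hm : m ≠ 0)
    (hv : padicValNat p m = k) (h : p ^ (k + 1) ≤ m) : (p + 1) * p ^ k ≤ m := by
  obtain ⟨q, rfl⟩ : p ^ k ∣ m := hv ▸ pow_padicValNat_dvd
  have hq : ¬ p ∣ q := by
    rintro ⟨r, rfl⟩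
    have := pow_succ_padicValNat_not_dvd (p := p) hm
    rw [hv] at this
    exact this ⟨r, by ring⟩
  have hpq : p ≤ q := by
    rw [pow_succ] at h
    exact Nat.le_of_mul_le_mul_left h (pow_pos hp.out.pos k)
  have : p + 1 ≤ q := lt_of_le_of_ne hpq (by rintro rfl; exact hq dvd_rfl)
  rw [mul_comm]
  exact Nat.mul_le_mul_left _ this

theorem isLeast_add_two_pow_log_succ {n : ℕ} (hn : n ≠ 0) :
    IsLeast {m | n + 2 ^ (Nat.log 2 n + 1) < m ∧ padicValNat 2 m = padicValNat 2 (n + 1)}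
      (n + 1 + 2 ^ (Nat.log 2 (n + 1) + 1)) := by
  set L := Nat.log 2 (n + 1)
  have hL : 2 ^ L ≤ n + 1 := Nat.pow_log_le_self 2 (by omega)
  have hL' : n + 1 < 2 ^ (L + 1) := Nat.lt_pow_succ_log_self one_lt_two _
  refine ⟨⟨?_, padicValNat_add_pow_of_lt (by omega) hL'⟩, ?_⟩
  · have : 2 ^ (Nat.log 2 n + 1) ≤ 2 ^ (L + 1) :=
      Nat.pow_le_pow_right two_pos (Nat.succ_le_succ (Nat.log_mono_right (by omega)))
    omega
  rintro m ⟨hm, hv⟩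
  rcases hL.lt_or_eq with hlt | hpow
  · rw [Nat.log_eq_of_pow_le_of_lt_pow (by omega) (by omega : n < 2 ^ (L + 1))] at hm
    omega
  -- Here the lower bound is `2 ^ (L + 1) - 1`, and the least `m` above it with `v₂ m = L` is
  -- `3 * 2 ^ L`.
  have hL0 : L ≠ 0 := by
    rintro h0
    rw [h0] at hpow
    omega
  obtain ⟨K, hK⟩ := Nat.exists_eq_succ_of_ne_zero hL0
  rw [hK, pow_succ] at hpow ⊢
  rw [Nat.log_eq_of_pow_le_of_lt_pow (by omega) (by rw [pow_succ]; omega : n < 2 ^ (K + 1)),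
    pow_succ] at hm
  have hvm : padicValNat 2 m = K + 1 := by
    rw [hv, ← hpow, ← pow_succ, padicValNat.prime_pow]
  have := succ_mul_pow_le_of_padicValNat_eq (by omega) hvm (by rw [pow_succ, pow_succ]; omega)
  rw [pow_succ] at this ⊢
  omega

theorem eq_add_two_pow_log_succ (x : ℕ → ℕ) (h1 : x 1 = 3)
    (hrec : ∀ n, 2 ≤ n →
      IsLeast {m : ℕ | x (n - 1) < m ∧ padicValNat 2 m = padicValNat 2 n} (x n))
    {n : ℕ} (hn : 1 ≤ n) : x n = n + 2 ^ (Nat.log 2 n + 1) := by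
  induction n, hn using Nat.le_induction with
  | base => simpa using h1
  | succ n hn ih =>
    refine (hrec (n + 1) (by omega)).unique ?_
    simpa [ih] using isLeast_add_two_pow_log_succ (by omega : n ≠ 0)

/-- The minimal recursive sequence starting at `3` (w.r.t. 2-adic valuation)
satisfies `x (2n-1) = 2·x (n-1) + 1` for `n ≥ 2`, `x (2n) = 2·x n` for `n ≥ 1`,
with `x 1 = 3`, `x 2 = 6`. -/
theorem stmt9 (x : ℕ → ℕ) (h1 : x 1 = 3)
    (hrec : ∀ n, 2 ≤ n →
      IsLeast {m : ℕ | x (n - 1) < m ∧ padicValNat 2 m = padicValNat 2 n} (x n)) :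
    (∀ n, 2 ≤ n → x (2 * n - 1) = 2 * x (n - 1) + 1) ∧
    (∀ n, 1 ≤ n → x (2 * n) = 2 * x n) ∧ x 1 = 3 ∧ x 2 = 6 := by
  have hx {n : ℕ} (hn : 1 ≤ n) := eq_add_two_pow_log_succ x h1 hrec hn
  have hdouble (n : ℕ) (hn : 1 ≤ n) : x (2 * n) = 2 * x n := by
    rw [hx (by omega), hx hn, Nat.log_of_one_lt_of_le one_lt_two (by omega),
      Nat.mul_div_cancel_left n two_pos, pow_succ]
    ring
  refine ⟨fun n hn => ?_, hdouble, h1, by simpa [h1] using hdouble 1 le_rfl⟩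
  rw [hx (by omega), hx (by omega), Nat.log_of_one_lt_of_le one_lt_two (by omega),
    show (2 * n - 1) / 2 = n - 1 by omega, pow_succ]
  omega
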